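/- arXiv:1408.0918 — 3 statements merged into one kernel-verified Lean document; each statement's English description precedes it below -/
import Mathlib

section
/- Let h : ℤ[E ⊔ V_s] → ℤE be the homomorphism with h(e) = e for e ∈ E and h(v) = 0 for v ∈ V_s. Then h is a chain homotopy from σ ∘ τ to the identity on B_*(G): namely d ∘ h = σ₀ ∘ τ₀ − id on ℤ[E ⊔ V_s], and h ∘ d = σ₁ ∘ τ₁ − id on ℤE. -/
/-!
`G = (V, E, s, r)` is a countable row-finite directed graph.  Row-finiteness is
encoded by a function `out : V → Finset E` with `e ∈ out v ↔ s e = v`.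
Sinks are the vertices `v` with `out v = ∅`; the free abelian group on a set `X`
is modelled as `X →₀ ℤ`, with `x ∈ X` identified with `Finsupp.single x 1`.
-/

open scoped Classical

noncomputable section

variable {V E : Type*}

/-- The boundary map `∂ : ℤV_ns → ℤV`, `∂(v) = (∑_{s(e)=v} r(e)) - v`. -/
def delMap (r : E → V) (out : V → Finset E) :
    ({v : V // out v ≠ ∅} →₀ ℤ) →ₗ[ℤ] (V →₀ ℤ) :=
  Finsupp.lift _ ℤ _ fun v =>
    (∑ e ∈ out v.1, Finsupp.single (r e) (1 : ℤ)) - Finsupp.single v.1 1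

/-- The boundary map `d : ℤE → ℤ[E ⊔ V_s]`. -/
def dMap (r : E → V) (out : V → Finset E) :
    (E →₀ ℤ) →ₗ[ℤ] ((E ⊕ {v : V // out v = ∅}) →₀ ℤ) :=
  Finsupp.lift _ ℤ _ fun e =>
    (if h : out (r e) = ∅ then Finsupp.single (Sum.inr ⟨r e, h⟩) (1 : ℤ)
      else ∑ f ∈ out (r e), Finsupp.single (Sum.inl f) (1 : ℤ)) -
      Finsupp.single (Sum.inl e) 1

/-- `σ₁ : ℤV_ns → ℤE`, `σ₁(v) = ∑_{s(e)=v} e`. -/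
def sigma1 (out : V → Finset E) :
    ({v : V // out v ≠ ∅} →₀ ℤ) →ₗ[ℤ] (E →₀ ℤ) :=
  Finsupp.lift _ ℤ _ fun v => ∑ e ∈ out v.1, Finsupp.single e (1 : ℤ)

/-- `σ₀ : ℤV → ℤ[E ⊔ V_s]`. -/
def sigma0 (out : V → Finset E) :
    (V →₀ ℤ) →ₗ[ℤ] ((E ⊕ {v : V // out v = ∅}) →₀ ℤ) :=
  Finsupp.lift _ ℤ _ fun v =>
    if h : out v = ∅ then Finsupp.single (Sum.inr ⟨v, h⟩) (1 : ℤ)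
    else ∑ e ∈ out v, Finsupp.single (Sum.inl e) (1 : ℤ)

/-- `τ₁ : ℤE → ℤV_ns`, `τ₁(e) = r(e)` if `r(e)` is not a sink, else `0`. -/
def tau1 (r : E → V) (out : V → Finset E) :
    (E →₀ ℤ) →ₗ[ℤ] ({v : V // out v ≠ ∅} →₀ ℤ) :=
  Finsupp.lift _ ℤ _ fun e =>
    if h : out (r e) ≠ ∅ then Finsupp.single (⟨r e, h⟩ : {v : V // out v ≠ ∅}) (1 : ℤ) else 0

/-- `τ₀ : ℤ[E ⊔ V_s] → ℤV`, `τ₀(e) = r(e)` and `τ₀(v) = v`. -/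
def tau0 (r : E → V) (out : V → Finset E) :
    ((E ⊕ {v : V // out v = ∅}) →₀ ℤ) →ₗ[ℤ] (V →₀ ℤ) :=
  Finsupp.lift _ ℤ _ (Sum.elim (fun e => Finsupp.single (r e) (1 : ℤ))
    (fun v => Finsupp.single v.1 (1 : ℤ)))

/-- The homotopy `h : ℤ[E ⊔ V_s] → ℤE`, `h(e) = e`, `h(v) = 0`. -/
def hMap (r : E → V) (out : V → Finset E) :
    ((E ⊕ {v : V // out v = ∅}) →₀ ℤ) →ₗ[ℤ] (E →₀ ℤ) :=
  Finsupp.lift _ ℤ _ (Sum.elim (fun e => Finsupp.single e (1 : ℤ)) (fun _ => 0))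

private lemma lift_single' {M : Type*} {X : Type*} [AddCommGroup M] [Module ℤ M]
    (f : X → M) (x : X) :
    Finsupp.lift M ℤ X f (Finsupp.single x (1 : ℤ)) = f x := by
  rw [← Finsupp.lift_symm_apply, (Finsupp.lift M ℤ X).symm_apply_apply]

/-- `h` is a chain homotopy from `σ ∘ τ` to the identity on `B_*(G)`:
`d ∘ h = σ₀ ∘ τ₀ − id` and `h ∘ d = σ₁ ∘ τ₁ − id`. -/
theorem h_homotopy_sigma_tau_to_id [Countable V] [Countable E]
    (s r : E → V) (out : V → Finset E)
    (hout : ∀ (v : V) (e : E), e ∈ out v ↔ s e = v) :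
    (dMap r out).comp (hMap r out) = (sigma0 out).comp (tau0 r out) - LinearMap.id ∧
    (hMap r out).comp (dMap r out) = (sigma1 out).comp (tau1 r out) - LinearMap.id := by
  constructor
  · refine Finsupp.lhom_ext' fun x => LinearMap.ext_ring ?_
    simp only [LinearMap.comp_apply, Finsupp.lsingle_apply, LinearMap.sub_apply,
      LinearMap.id_apply, one_smul]
    cases x with
    | inl e =>
      simp only [hMap, tau0, sigma0, dMap, lift_single', Sum.elim_inl]
    | inr v =>
      simp only [hMap, tau0, sigma0, dMap, lift_single', Sum.elim_inr, map_zero,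
        dif_pos v.2, Subtype.coe_eta, sub_self]
  · refine Finsupp.lhom_ext' fun e => LinearMap.ext_ring ?_
    simp only [LinearMap.comp_apply, Finsupp.lsingle_apply, LinearMap.sub_apply,
      LinearMap.id_apply, one_smul]
    simp only [dMap, lift_single']
    by_cases h : out (r e) = ∅
    · simp [hMap, sigma1, tau1, lift_single', h, map_sub]
    · simp [hMap, sigma1, tau1, lift_single', h, map_sub, map_sum]
end
end

section
/- The map σ₁ restricts to a group isomorphism ker ∂ → ker d, and σ₀ induces a group isomorphism ℤV / image(∂) → ℤ[E ⊔ V_s] / image(d). (In other words, the homotopy equivalence σ : A_*(G) → B_*(G) induces isomorphisms in homology in degrees 1 and 0.) -/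
/-!
`G = (V, E, s, r)` is a countable row-finite directed graph.  Row-finiteness is
encoded by a function `out : V → Finset E` with `e ∈ out v ↔ s e = v`.
Sinks are the vertices `v` with `out v = ∅`; the free abelian group on a set `X`
is modelled as `X →₀ ℤ`, with `x ∈ X` identified with `Finsupp.single x 1`.
-/

open scoped Classical

noncomputable section

variable {V E : Type*}

def h0Map (out : V → Finset E) : (V →₀ ℤ) →ₗ[ℤ] ({v : V // out v ≠ ∅} →₀ ℤ) :=
  Finsupp.lift _ ℤ _ fun v => if h : out v ≠ ∅ then Finsupp.single ⟨v, h⟩ 1 else 0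

def kMap (out : V → Finset E) : ((E ⊕ {v : V // out v = ∅}) →₀ ℤ) →ₗ[ℤ] (E →₀ ℤ) :=
  Finsupp.lift _ ℤ _ (Sum.elim (fun e => Finsupp.single e 1) fun _ => 0)

variable (r : E → V) (out : V → Finset E)

@[simp] lemma delMap_single (v : {v : V // out v ≠ ∅}) :
    delMap r out (Finsupp.single v 1)
      = (∑ e ∈ out v.1, Finsupp.single (r e) (1 : ℤ)) - Finsupp.single v.1 1 := by
  simp [delMap]

@[simp] lemma dMap_single (e : E) :
    dMap r out (Finsupp.single e 1)
      = (if h : out (r e) = ∅ then Finsupp.single (Sum.inr ⟨r e, h⟩) (1 : ℤ)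
          else ∑ f ∈ out (r e), Finsupp.single (Sum.inl f) (1 : ℤ)) -
          Finsupp.single (Sum.inl e) 1 := by
  simp [dMap]

@[simp] lemma sigma1_single (v : {v : V // out v ≠ ∅}) :
    sigma1 out (Finsupp.single v 1) = ∑ e ∈ out v.1, Finsupp.single e (1 : ℤ) := by
  simp [sigma1]

@[simp] lemma sigma0_single (v : V) :
    sigma0 out (Finsupp.single v 1)
      = if h : out v = ∅ then Finsupp.single (Sum.inr ⟨v, h⟩) (1 : ℤ)
        else ∑ e ∈ out v, Finsupp.single (Sum.inl e) (1 : ℤ) := by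
  simp [sigma0]

@[simp] lemma tau1_single (e : E) :
    tau1 r out (Finsupp.single e 1)
      = if h : out (r e) ≠ ∅ then Finsupp.single (⟨r e, h⟩ : {v : V // out v ≠ ∅}) (1 : ℤ)
        else 0 := by
  simp [tau1]

@[simp] lemma tau0_single_inl (e : E) :
    tau0 r out (Finsupp.single (Sum.inl e) 1) = Finsupp.single (r e) (1 : ℤ) := by
  simp [tau0]

@[simp] lemma tau0_single_inr (v : {v : V // out v = ∅}) :
    tau0 r out (Finsupp.single (Sum.inr v) 1) = Finsupp.single v.1 (1 : ℤ) := by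
  simp [tau0]

@[simp] lemma h0Map_single (v : V) :
    h0Map (E := E) out (Finsupp.single v 1)
      = if h : out v ≠ ∅ then Finsupp.single (⟨v, h⟩ : {v : V // out v ≠ ∅}) (1 : ℤ)
        else 0 := by
  simp [h0Map]

@[simp] lemma kMap_single_inl (e : E) :
    kMap (V := V) out (Finsupp.single (Sum.inl e) 1) = Finsupp.single e (1 : ℤ) := by
  simp [kMap]

@[simp] lemma kMap_single_inr (v : {v : V // out v = ∅}) :
    kMap out (Finsupp.single (Sum.inr v) 1) = 0 := by
  simp [kMap]

lemma L1 : (dMap r out).comp (sigma1 out) = (sigma0 out).comp (delMap r out) := by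
  refine Finsupp.lhom_ext' fun v => LinearMap.ext_ring ?_
  simp only [LinearMap.comp_apply, Finsupp.lsingle_apply, delMap_single, sigma1_single,
    map_sum, map_sub, dMap_single, sigma0_single, v.2, dif_neg, Finset.sum_sub_distrib]
  simp

lemma L2 : (delMap r out).comp (tau1 r out) = (tau0 r out).comp (dMap r out) := by
  refine Finsupp.lhom_ext' fun e => LinearMap.ext_ring ?_
  by_cases h : out (r e) = ∅ <;>
    simp [LinearMap.comp_apply, h, map_sum, map_sub]

lemma L3 : (tau1 r out).comp (sigma1 out)
    = LinearMap.id + (h0Map out).comp (delMap r out) := by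
  refine Finsupp.lhom_ext' fun v => LinearMap.ext_ring ?_
  simp only [LinearMap.comp_apply, Finsupp.lsingle_apply, LinearMap.add_apply,
    LinearMap.id_apply, sigma1_single, delMap_single, map_sum, map_sub,
    tau1_single, h0Map_single, v.2, dif_pos, ne_eq, not_false_iff]
  abel

lemma L4 : (sigma1 out).comp (tau1 r out)
    = LinearMap.id + (kMap out).comp (dMap r out) := by
  refine Finsupp.lhom_ext' fun e => LinearMap.ext_ring ?_
  by_cases h : out (r e) = ∅ <;>
    simp [LinearMap.comp_apply, h, map_sum, map_sub]

lemma L5 : (tau0 r out).comp (sigma0 out)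
    = LinearMap.id + (delMap r out).comp (h0Map out) := by
  refine Finsupp.lhom_ext' fun v => LinearMap.ext_ring ?_
  by_cases h : out v = ∅ <;>
    simp [LinearMap.comp_apply, h, map_sum, map_sub] <;> abel

lemma L6 : (sigma0 out).comp (tau0 r out)
    = LinearMap.id + (dMap r out).comp (kMap out) := by
  refine Finsupp.lhom_ext' fun x => LinearMap.ext_ring ?_
  cases x with
  | inl e => by_cases h : out (r e) = ∅ <;>
      simp [LinearMap.comp_apply, h] <;> abel
  | inr v => simp [LinearMap.comp_apply, v.2]

/-- `σ₁` restricts to a group isomorphism `ker ∂ → ker d`, and `σ₀` induces a group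
isomorphism `ℤV / image ∂ → ℤ[E ⊔ V_s] / image d`; that is, the homotopy equivalence
`σ : A_*(G) → B_*(G)` induces isomorphisms in homology in degrees 1 and 0. -/
theorem sigma_homology_iso [Countable V] [Countable E]
    (s r : E → V) (out : V → Finset E)
    (hout : ∀ (v : V) (e : E), e ∈ out v ↔ s e = v) :
    (∃ f : LinearMap.ker (delMap r out) ≃ₗ[ℤ] LinearMap.ker (dMap r out),
        ∀ x : LinearMap.ker (delMap r out), (f x : E →₀ ℤ) = sigma1 out x) ∧
    (∃ g : ((V →₀ ℤ) ⧸ LinearMap.range (delMap r out)) ≃ₗ[ℤ]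
        (((E ⊕ {v : V // out v = ∅}) →₀ ℤ) ⧸ LinearMap.range (dMap r out)),
        ∀ x : V →₀ ℤ,
          g (Submodule.Quotient.mk x) = Submodule.Quotient.mk (sigma0 out x)) := by
  constructor
  · -- kernels
    have hσ : ∀ x ∈ LinearMap.ker (delMap r out),
        sigma1 out x ∈ LinearMap.ker (dMap r out) := by
      intro x hx
      have h := congrArg (fun φ : _ →ₗ[ℤ] _ => φ x) (L1 r out)
      simp only [LinearMap.comp_apply] at h
      simp [LinearMap.mem_ker, h, LinearMap.mem_ker.mp hx]
    have hτ : ∀ x ∈ LinearMap.ker (dMap r out),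
        tau1 r out x ∈ LinearMap.ker (delMap r out) := by
      intro x hx
      have h := congrArg (fun φ : _ →ₗ[ℤ] _ => φ x) (L2 r out)
      simp only [LinearMap.comp_apply] at h
      simp [LinearMap.mem_ker, h, LinearMap.mem_ker.mp hx]
    refine ⟨LinearEquiv.ofLinear ((sigma1 out).restrict hσ) ((tau1 r out).restrict hτ)
      ?_ ?_, fun x => rfl⟩
    · apply LinearMap.ext
      rintro ⟨y, hy⟩
      apply Subtype.ext
      have h := congrArg (fun φ : _ →ₗ[ℤ] _ => φ y) (L4 r out)
      simp only [LinearMap.comp_apply, LinearMap.add_apply, LinearMap.id_apply] at h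
      simpa [LinearMap.restrict_apply, LinearMap.mem_ker.mp hy] using h
    · apply LinearMap.ext
      rintro ⟨x, hx⟩
      apply Subtype.ext
      have h := congrArg (fun φ : _ →ₗ[ℤ] _ => φ x) (L3 r out)
      simp only [LinearMap.comp_apply, LinearMap.add_apply, LinearMap.id_apply] at h
      simpa [LinearMap.restrict_apply, LinearMap.mem_ker.mp hx] using h
  · -- quotients
    have hq1 : LinearMap.range (delMap r out) ≤
        (LinearMap.range (dMap r out)).comap (sigma0 out) := by
      rintro _ ⟨y, rfl⟩
      have h := congrArg (fun φ : _ →ₗ[ℤ] _ => φ y) (L1 r out)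
      simp only [LinearMap.comp_apply] at h
      exact ⟨sigma1 out y, h⟩
    have hq2 : LinearMap.range (dMap r out) ≤
        (LinearMap.range (delMap r out)).comap (tau0 r out) := by
      rintro _ ⟨y, rfl⟩
      have h := congrArg (fun φ : _ →ₗ[ℤ] _ => φ y) (L2 r out)
      simp only [LinearMap.comp_apply] at h
      exact ⟨tau1 r out y, h⟩
    have H1 : (Submodule.mapQ _ _ (sigma0 out) hq1).comp
        (Submodule.mapQ _ _ (tau0 r out) hq2) = LinearMap.id := by
      apply Submodule.linearMap_qext
      apply LinearMap.ext
      intro x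
      simp only [LinearMap.comp_apply, Submodule.mkQ_apply, Submodule.mapQ_apply,
        LinearMap.id_apply]
      rw [Submodule.Quotient.eq]
      have h := congrArg (fun φ : _ →ₗ[ℤ] _ => φ x) (L6 r out)
      simp only [LinearMap.comp_apply, LinearMap.add_apply, LinearMap.id_apply] at h
      rw [h]
      simp
    have H2 : (Submodule.mapQ _ _ (tau0 r out) hq2).comp
        (Submodule.mapQ _ _ (sigma0 out) hq1) = LinearMap.id := by
      apply Submodule.linearMap_qext
      apply LinearMap.ext
      intro x
      simp only [LinearMap.comp_apply, Submodule.mkQ_apply, Submodule.mapQ_apply,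
        LinearMap.id_apply]
      rw [Submodule.Quotient.eq]
      have h := congrArg (fun φ : _ →ₗ[ℤ] _ => φ x) (L5 r out)
      simp only [LinearMap.comp_apply, LinearMap.add_apply, LinearMap.id_apply] at h
      rw [h]
      simp
    exact ⟨LinearEquiv.ofLinear _ _ H1 H2,
      fun x => by rw [LinearEquiv.ofLinear_apply, Submodule.mapQ_apply]⟩
end
end

section
/- The quotient group ℤⁿ / image(D² − 1) is isomorphic to ℤ × ℤ/2^{n−1}ℤ. (This computes K¹ of the quantum real projective space ℝP^{2n−1}_q, i.e. the quantum lens space with p = 2.) -/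
/-!
`ℤⁿ` is the abelian group of functions `Fin n → ℤ` (coordinates `1,…,n`
corresponding to indices `0,…,n-1`).  `shiftE n` is the shift operator `t`,
`(tη)(i) = η(i+1)` for `i < n` and `(tη)(n) = 0`, and
`DE n = 1 + t + t² + … + t^{n−1}`.
-/

noncomputable section

/-- The shift operator `t` on `ℤⁿ`. -/
def shiftE (n : ℕ) : Module.End ℤ (Fin n → ℤ) :=
  (AddMonoidHom.mk' (fun (η : Fin n → ℤ) (i : Fin n) => if h : (i : ℕ) + 1 < n then η ⟨(i : ℕ) + 1, h⟩ else 0) (by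
    intro a b
    funext i
    by_cases h : (i : ℕ) + 1 < n <;> simp [h])).toIntLinearMap

/-- The operator `D = 1 + t + t² + … + t^{n−1}` on `ℤⁿ`. -/
def DE (n : ℕ) : Module.End ℤ (Fin n → ℤ) := ∑ i ∈ Finset.range n, shiftE n ^ i


/-!
Since `t` is nilpotent, `D = (1 - t)⁻¹`, so `D² - 1 = (1 - (1 - t)²) D² = (2t - t²) D²` has the
same image as `2t - t²`. Identifying `ℤⁿ` with `ℤ[x]/(xⁿ)` (`t` acting as `x`), the quotient is
`ℤ[x]/(xⁿ, x² - 2x)`: there `x^k = 2^(k-1) x` for `k ≥ 1`, so it is `ℤ ⊕ ℤx` with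
`2^(n-1) x = xⁿ = 0`. In coordinates, with `e_j` the basis vectors indexed by `Fin n`, the
relations read `e_j = 2 e_(j+1)` for `j ≤ n - 3` and `2 e_0 = 0`, and the isomorphism is
`η ↦ (η_(n-1), ∑_(j ≤ n-2) 2^(n-2-j) η_j mod 2^(n-1))`.
-/

lemma range_geom_sum_sq_sub_one {R M : Type*} [Ring R] [AddCommGroup M] [Module R M]
    {t : Module.End R M} {n : ℕ} (ht : t ^ n = 0) :
    LinearMap.range ((∑ i ∈ Finset.range n, t ^ i) ^ 2 - 1) =
      LinearMap.range (2 * t - t ^ 2) := by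
  set D := ∑ i ∈ Finset.range n, t ^ i
  have hleft : (1 - t) * D = 1 := by rw [mul_neg_geom_sum, ht, sub_zero]
  have hright : D * (1 - t) = 1 := by rw [geom_sum_mul_neg, ht, sub_zero]
  have hfactor : D ^ 2 - 1 = (2 * t - t ^ 2) * D ^ 2 := by
    have hinv : (1 - t) ^ 2 * D ^ 2 = 1 := by
      rw [sq, sq, mul_assoc, ← mul_assoc (1 - t) D, hleft, one_mul, hleft]
    rw [← hinv]
    noncomm_ring
  have hsurj : LinearMap.range (D ^ 2) = ⊤ := by
    have hinv : D ^ 2 * (1 - t) ^ 2 = 1 := by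
      rw [sq, sq, mul_assoc, ← mul_assoc D (1 - t), hright, one_mul, hright]
    refine LinearMap.range_eq_top.mpr fun x => ⟨((1 - t) ^ 2 : Module.End R M) x, ?_⟩
    rw [← Module.End.mul_apply, hinv, Module.End.one_apply]
  rw [hfactor, Module.End.mul_eq_comp, LinearMap.range_comp_of_range_eq_top _ hsurj]

lemma single_eq_smul_single_one {ι R : Type*} [DecidableEq ι] [Semiring R] (i : ι) (c : R) :
    (Pi.single i c : ι → R) = c • Pi.single i 1 := by
  rw [← Pi.single_smul, smul_eq_mul, mul_one]

lemma shiftE_apply (n : ℕ) (η : Fin n → ℤ) (i : Fin n) :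
    shiftE n η i = if h : (i : ℕ) + 1 < n then η ⟨i + 1, h⟩ else 0 := rfl

lemma shiftE_pow_apply (n k : ℕ) (η : Fin n → ℤ) (i : Fin n) :
    (shiftE n ^ k) η i = if h : (i : ℕ) + k < n then η ⟨i + k, h⟩ else 0 := by
  induction k generalizing η with
  | zero => simp
  | succ k ih =>
    rw [pow_succ, Module.End.mul_apply, ih]
    by_cases h : (i : ℕ) + (k + 1) < n
    · rw [dif_pos (by omega), dif_pos h, shiftE_apply, dif_pos (by simp only; omega)]
      rfl
    · rw [dif_neg h]
      split_ifs
      · rw [shiftE_apply, dif_neg (by simp only; omega)]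
      · rfl

lemma shiftE_pow_self (n : ℕ) : shiftE n ^ n = 0 := by
  ext η i
  simp [shiftE_pow_apply]

lemma shiftE_single_zero (k : ℕ) (c : ℤ) : shiftE (k + 1) (Pi.single 0 c) = 0 := by
  ext i
  rw [shiftE_apply]
  split_ifs
  · rw [Pi.single_eq_of_ne (by rw [Ne, Fin.ext_iff]; simp)]
    rfl
  · rfl

lemma shiftE_single_succ (k : ℕ) (i : Fin k) (c : ℤ) :
    shiftE (k + 1) (Pi.single i.succ c) = Pi.single i.castSucc c := by
  ext j
  rw [shiftE_apply]
  split_ifs <;> simp [Pi.single_apply, Fin.ext_iff]; omega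

def twoShiftSubSq (n : ℕ) : Module.End ℤ (Fin n → ℤ) := 2 * shiftE n - shiftE n ^ 2

lemma twoShiftSubSq_single_zero (k : ℕ) (c : ℤ) :
    twoShiftSubSq (k + 1) (Pi.single 0 c) = 0 := by
  simp [twoShiftSubSq, sq, shiftE_single_zero]

lemma twoShiftSubSq_single_one (k : ℕ) (c : ℤ) :
    twoShiftSubSq (k + 2) (Pi.single 1 c) = Pi.single 0 (2 * c) := by
  have hshift := shiftE_single_succ (k + 1) 0 c
  simp only [Fin.succ_zero_eq_one, Fin.castSucc_zero] at hshift
  simp [twoShiftSubSq, sq, hshift, shiftE_single_zero, two_mul, Pi.single_add]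

lemma twoShiftSubSq_single_succ_succ (k : ℕ) (i : Fin k) (c : ℤ) :
    twoShiftSubSq (k + 2) (Pi.single i.succ.succ c) =
      Pi.single i.succ.castSucc (2 * c) - Pi.single i.castSucc.castSucc c := by
  simp [twoShiftSubSq, sq, shiftE_single_succ, two_mul, Pi.single_add]

section Quotient

variable (m : ℕ)

def weightedSum : (Fin (m + 2) → ℤ) →ₗ[ℤ] ℤ :=
  ∑ j : Fin (m + 1), (2 ^ (m - j : ℕ) : ℤ) • LinearMap.proj j.castSucc

lemma weightedSum_apply (η : Fin (m + 2) → ℤ) :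
    weightedSum m η = ∑ j : Fin (m + 1), 2 ^ (m - j : ℕ) * η j.castSucc := by
  simp [weightedSum]

lemma weightedSum_single_last (c : ℤ) : weightedSum m (Pi.single (Fin.last _) c) = 0 := by
  simp [weightedSum_apply, Fin.castSucc_ne_last]

lemma weightedSum_single_castSucc (j : Fin (m + 1)) (c : ℤ) :
    weightedSum m (Pi.single j.castSucc c) = 2 ^ (m - j : ℕ) * c := by
  simp [weightedSum_apply, Pi.single_apply]

def lastAndWeightedSum : (Fin (m + 2) → ℤ) →ₗ[ℤ] ℤ × ZMod (2 ^ (m + 1)) :=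
  (LinearMap.proj (Fin.last _)).prod ((Int.castAddHom _).toIntLinearMap ∘ₗ weightedSum m)

lemma lastAndWeightedSum_apply (η : Fin (m + 2) → ℤ) :
    lastAndWeightedSum m η = (η (Fin.last _), (weightedSum m η : ZMod (2 ^ (m + 1)))) := rfl

lemma lastAndWeightedSum_surjective : Function.Surjective (lastAndWeightedSum m) := by
  rintro ⟨a, b⟩
  obtain ⟨b, rfl⟩ := ZMod.intCast_surjective b
  refine ⟨Pi.single (Fin.last _) a + Pi.single (Fin.last m).castSucc b, ?_⟩
  simp [lastAndWeightedSum_apply, weightedSum_single_last, weightedSum_single_castSucc]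

lemma lastAndWeightedSum_comp_twoShiftSubSq :
    lastAndWeightedSum m ∘ₗ twoShiftSubSq (m + 2) = 0 := by
  refine LinearMap.pi_ext fun i c => ?_
  rw [LinearMap.comp_apply, LinearMap.zero_apply]
  cases i using Fin.cases with
  | zero => rw [twoShiftSubSq_single_zero (m + 1), map_zero]
  | succ i =>
    cases i using Fin.cases with
    | zero =>
      rw [Fin.succ_zero_eq_one, twoShiftSubSq_single_one, ← Fin.castSucc_zero,
        lastAndWeightedSum_apply, weightedSum_single_castSucc, Fin.val_zero, Nat.sub_zero,
        ← mul_assoc, ← pow_succ, (ZMod.intCast_zmod_eq_zero_iff_dvd _ _).mpr]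
      · simp
      · exact_mod_cast dvd_mul_right _ c
    | succ j =>
      have hweight : (2 : ℤ) ^ (m - j.succ : ℕ) * (2 * c) = 2 ^ (m - j.castSucc : ℕ) * c := by
        rw [Fin.val_succ, Fin.val_castSucc, show m - j = m - (j + 1) + 1 by omega, pow_succ]
        ring
      rw [twoShiftSubSq_single_succ_succ, lastAndWeightedSum_apply, map_sub,
        weightedSum_single_castSucc, weightedSum_single_castSucc, hweight, sub_self]
      simp [Fin.castSucc_ne_last]

lemma mkQ_single_castSucc (j : Fin (m + 1)) :
    (LinearMap.range (twoShiftSubSq (m + 2))).mkQ (Pi.single j.castSucc 1) =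
      (2 ^ (m - j : ℕ) : ℤ) •
        (LinearMap.range (twoShiftSubSq (m + 2))).mkQ (Pi.single (Fin.last m).castSucc 1) := by
  induction j using Fin.reverseInduction with
  | last => simp
  | cast i ih =>
    have hrel := LinearMap.congr_fun (LinearMap.range_mkQ_comp (twoShiftSubSq (m + 2)))
      (Pi.single i.succ.succ 1)
    rw [LinearMap.comp_apply, LinearMap.zero_apply, twoShiftSubSq_single_succ_succ,
      single_eq_smul_single_one _ (2 * 1), mul_one, map_sub, sub_eq_zero] at hrel
    rw [← hrel, map_smul, ih, smul_smul, Fin.val_castSucc, Fin.val_succ,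
      show m - i = m - (i + 1) + 1 by omega, pow_succ']

lemma two_pow_smul_mkQ_single_castSucc_last :
    (2 ^ (m + 1) : ℤ) •
      (LinearMap.range (twoShiftSubSq (m + 2))).mkQ (Pi.single (Fin.last m).castSucc 1) = 0 := by
  have hrel := LinearMap.congr_fun (LinearMap.range_mkQ_comp (twoShiftSubSq (m + 2)))
    (Pi.single 1 1)
  rw [LinearMap.comp_apply, LinearMap.zero_apply, twoShiftSubSq_single_one,
    single_eq_smul_single_one _ (2 * 1), mul_one, ← Fin.castSucc_zero, map_smul,
    mkQ_single_castSucc, smul_smul, Fin.val_zero, Nat.sub_zero, ← pow_succ'] at hrel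
  exact hrel

lemma mkQ_eq_weightedSum_smul_add_smul (η : Fin (m + 2) → ℤ) :
    (LinearMap.range (twoShiftSubSq (m + 2))).mkQ η =
      weightedSum m η •
          (LinearMap.range (twoShiftSubSq (m + 2))).mkQ (Pi.single (Fin.last m).castSucc 1) +
        η (Fin.last _) •
          (LinearMap.range (twoShiftSubSq (m + 2))).mkQ (Pi.single (Fin.last _) 1) := by
  conv_lhs => rw [← Finset.univ_sum_single η]
  rw [map_sum, Fin.sum_univ_castSucc, weightedSum_apply, Finset.sum_smul]
  congr 1
  · refine Finset.sum_congr rfl fun j _ => ?_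
    rw [single_eq_smul_single_one, map_smul, mkQ_single_castSucc, smul_smul, mul_comm]
  · rw [single_eq_smul_single_one, map_smul]

lemma range_twoShiftSubSq_eq_ker :
    LinearMap.range (twoShiftSubSq (m + 2)) = LinearMap.ker (lastAndWeightedSum m) := by
  refine le_antisymm (LinearMap.range_le_ker_iff.mpr (lastAndWeightedSum_comp_twoShiftSubSq m))
    fun η hη => ?_
  rw [LinearMap.mem_ker, lastAndWeightedSum_apply, Prod.mk_eq_zero,
    ZMod.intCast_zmod_eq_zero_iff_dvd] at hη
  obtain ⟨hlast, k, hk⟩ := hη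
  rw [← Submodule.Quotient.mk_eq_zero, ← Submodule.mkQ_apply, mkQ_eq_weightedSum_smul_add_smul,
    hlast, hk, zero_smul, add_zero, mul_comm, mul_smul, Nat.cast_pow, Nat.cast_ofNat,
    two_pow_smul_mkQ_single_castSucc_last, smul_zero]

def quotRangeTwoShiftSubSqEquiv :
    ((Fin (m + 2) → ℤ) ⧸ LinearMap.range (twoShiftSubSq (m + 2))) ≃ₗ[ℤ]
      ℤ × ZMod (2 ^ (m + 1)) :=
  (Submodule.quotEquivOfEq _ _ (range_twoShiftSubSq_eq_ker m)).trans
    ((lastAndWeightedSum m).quotKerEquivOfSurjective (lastAndWeightedSum_surjective m))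

end Quotient

/-- The quotient group `ℤⁿ / image(D² − 1)` is isomorphic to `ℤ × ℤ/2^{n−1}ℤ`.
(This computes `K¹` of the quantum real projective space `ℝP^{2n−1}_q`.) -/
theorem quantum_RP_K1 (n : ℕ) (hn : 2 ≤ n) :
    Nonempty (((Fin n → ℤ) ⧸ LinearMap.range (DE n ^ 2 - 1)) ≃+ ℤ × ZMod (2 ^ (n - 1))) := by
  obtain ⟨m, rfl⟩ := Nat.exists_eq_add_of_le' hn
  rw [DE, range_geom_sum_sq_sub_one (shiftE_pow_self _)]
  exact ⟨(quotRangeTwoShiftSubSqEquiv m).toAddEquiv⟩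
end
end
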